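/- arXiv:1710.08948 — 4 statements merged into one kernel-verified Lean document; each statement's English description precedes it below -/
import Mathlib

section
/- Let x ∈ End(V) be nilpotent with Jordan type a partition σ of dim V, and let U ⊂ V be a 1-dimensional subspace with U ⊆ ker(x). Let k be the maximal integer such that U ⊆ x^{k-1}(V). Then the Jordan type σ' of the induced endomorphism of V/U is obtained from σ by removing one box from the bottom of the k-th column of σ, i.e., by decreasing by 1 the part σ_j with σ_j ≥ k and j maximal with this property. -/
open Module

lemma aux_nat_eq_of_lt_iff {a b : ℕ} (h : ∀ c, c < a ↔ c < b) : a = b := by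
  rcases Nat.lt_trichotomy a b with h' | h' | h'
  · exact absurd ((h a).mpr h') (lt_irrefl a)
  · exact h'
  · exact absurd ((h b).mp h') (lt_irrefl b)

lemma aux_rowLen_eq {μ : YoungDiagram} {i r : ℕ} (h : ∀ c, (i, c) ∈ μ ↔ c < r) :
    μ.rowLen i = r :=
  aux_nat_eq_of_lt_iff fun c => (YoungDiagram.mem_iff_lt_rowLen.symm.trans (h c))

lemma aux_finrank_map {V W : Type*} [AddCommGroup V] [Module ℂ V] [AddCommGroup W]
    [Module ℂ W] [FiniteDimensional ℂ V] (f : V →ₗ[ℂ] W) (p : Submodule ℂ V)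
    (h : LinearMap.ker f ≤ p) :
    finrank ℂ (p.map f) + finrank ℂ (LinearMap.ker f) = finrank ℂ p := by
  have h1 := LinearMap.finrank_range_add_finrank_ker (f.domRestrict p)
  rw [LinearMap.range_domRestrict, LinearMap.ker_domRestrict,
    (Submodule.comapSubtypeEquivOfLe h).finrank_eq] at h1
  exact h1

lemma aux_finrank_comap {V W : Type*} [AddCommGroup V] [Module ℂ V] [AddCommGroup W]
    [Module ℂ W] [FiniteDimensional ℂ V] (f : V →ₗ[ℂ] W) (q : Submodule ℂ W) :
    finrank ℂ (q.comap f) =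
      finrank ℂ ((LinearMap.range f ⊓ q : Submodule ℂ W) : Type _) +
        finrank ℂ (LinearMap.ker f) := by
  have h := aux_finrank_map f (q.comap f) (fun v hv => by
    simp only [Submodule.mem_comap, LinearMap.mem_ker.mp hv, Submodule.zero_mem])
  rw [Submodule.map_comap_eq] at h
  exact h.symm



/-- `x` has Jordan type the partition recorded by the Young diagram `σ`: the length of the
`(k+1)`-st column of `σ` (i.e. the number of parts of size at least `k+1`) equals
`dim ker x^{k+1} - dim ker x^k`. -/
def HasJordanType {V : Type*} [AddCommGroup V] [Module ℂ V]
    (x : Module.End ℂ V) (σ : YoungDiagram) : Prop :=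
  ∀ k : ℕ, σ.colLen k =
    Module.finrank ℂ (LinearMap.ker (x ^ (k + 1))) - Module.finrank ℂ (LinearMap.ker (x ^ k))

/-- if `x` is nilpotent with Jordan type `σ`, `U` is a line in `ker x`, and `k`
is maximal with `U ⊆ x^{k-1}(V)`, then the Jordan type of the induced endomorphism of `V/U`
is obtained from `σ` by removing one box from the bottom of the `k`-th column, i.e. by
decreasing by `1` the part `σ_j` where `j` is maximal with `σ_j ≥ k`. -/
theorem jordan_type_quotient_by_line {V : Type*} [AddCommGroup V] [Module ℂ V]
    [FiniteDimensional ℂ V] (x : Module.End ℂ V) (hx : IsNilpotent x)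
    (σ : YoungDiagram) (hσ : HasJordanType x σ)
    (U : Submodule ℂ V) (hU1 : Module.finrank ℂ U = 1) (hUker : U ≤ LinearMap.ker x)
    (k : ℕ) (hk : 1 ≤ k)
    (hk1 : U ≤ LinearMap.range (x ^ (k - 1))) (hk2 : ¬ U ≤ LinearMap.range (x ^ k)) :
    ∀ x' : Module.End ℂ (V ⧸ U),
      (∀ v : V, x' (Submodule.Quotient.mk v) = Submodule.Quotient.mk (x v)) →
      ∀ σ' : YoungDiagram, HasJordanType x' σ' →
        σ'.rowLen (σ.colLen (k - 1) - 1) = σ.rowLen (σ.colLen (k - 1) - 1) - 1 ∧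
        ∀ i : ℕ, i ≠ σ.colLen (k - 1) - 1 → σ'.rowLen i = σ.rowLen i := by
  intro x' hx' σ' hσ'
  have hpow : ∀ (m : ℕ) (v : V),
      (x' ^ m) (Submodule.Quotient.mk v) = Submodule.Quotient.mk ((x ^ m) v) := by
    intro m
    induction m with
    | zero => intro v; rw [pow_zero, pow_zero]; rfl
    | succ n ih =>
      intro v
      rw [pow_succ, pow_succ, Module.End.mul_apply, Module.End.mul_apply, hx' v, ih (x v)]
  have hUcomap : ∀ m : ℕ, U ≤ U.comap (x ^ m) := by
    intro m u hu
    rw [Submodule.mem_comap]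
    cases m with
    | zero => simpa using hu
    | succ n =>
      rw [pow_succ, Module.End.mul_apply, LinearMap.mem_ker.mp (hUker hu), map_zero]
      exact U.zero_mem
  have hcomap : ∀ m : ℕ, (LinearMap.ker (x' ^ m)).comap U.mkQ = U.comap (x ^ m) := by
    intro m
    ext v
    simp only [Submodule.mem_comap, LinearMap.mem_ker, Submodule.mkQ_apply]
    rw [hpow m v, Submodule.Quotient.mk_eq_zero]
  have hkermap : ∀ m : ℕ, LinearMap.ker (x' ^ m) = (U.comap (x ^ m)).map U.mkQ := by
    intro m
    rw [← hcomap m]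
    exact (Submodule.map_comap_eq_self (by rw [Submodule.range_mkQ]; exact le_top)).symm
  have hd' : ∀ m : ℕ,
      finrank ℂ (LinearMap.ker (x' ^ m)) + 1 = finrank ℂ (U.comap (x ^ m)) := by
    intro m
    have h := aux_finrank_map U.mkQ (U.comap (x ^ m))
      (by rw [Submodule.ker_mkQ]; exact hUcomap m)
    rw [Submodule.ker_mkQ, hU1] at h
    rw [hkermap m]
    exact h
  have hrange : ∀ m n : ℕ, m ≤ n → LinearMap.range (x ^ n) ≤ LinearMap.range (x ^ m) := by
    intro m n h
    rw [show n = m + (n - m) by omega, pow_add, Module.End.mul_eq_comp]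
    exact LinearMap.range_comp_le_range _ _
  have hkerm : ∀ m n : ℕ, m ≤ n → LinearMap.ker (x ^ m) ≤ LinearMap.ker (x ^ n) := by
    intro m n h
    rw [show n = (n - m) + m by omega, pow_add, Module.End.mul_eq_comp]
    exact LinearMap.ker_le_ker_comp _ _
  have hWsmall : ∀ m : ℕ, m ≤ k - 1 →
      finrank ℂ (U.comap (x ^ m)) = 1 + finrank ℂ (LinearMap.ker (x ^ m)) := by
    intro m hm
    rw [aux_finrank_comap]
    congr 1
    have hle : U ≤ LinearMap.range (x ^ m) := le_trans hk1 (hrange m (k - 1) hm)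
    rw [inf_eq_right.mpr hle]
    exact hU1
  have hWbig : ∀ m : ℕ, k ≤ m →
      finrank ℂ (U.comap (x ^ m)) = finrank ℂ (LinearMap.ker (x ^ m)) := by
    intro m hm
    rw [aux_finrank_comap]
    have hbot : LinearMap.range (x ^ m) ⊓ U = ⊥ := by
      rw [Submodule.eq_bot_iff]
      rintro u ⟨hur, huU⟩
      by_contra hu0
      have hspan : (ℂ ∙ u) = U := Submodule.eq_of_le_of_finrank_le
        ((Submodule.span_singleton_le_iff_mem u U).mpr huU)
        (by rw [finrank_span_singleton hu0, hU1])
      apply hk2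
      rw [← hspan]
      exact (Submodule.span_singleton_le_iff_mem u _).mpr (hrange k m hm hur)
    rw [hbot]
    simp
  have hstrict : finrank ℂ (LinearMap.ker (x ^ (k - 1))) <
      finrank ℂ (LinearMap.ker (x ^ k)) := by
    obtain ⟨u, huU, hu0⟩ := Submodule.exists_mem_ne_zero_of_ne_bot (p := U)
      (by intro h; rw [h] at hU1; simp at hU1)
    obtain ⟨v, hv⟩ := hk1 huU
    apply Submodule.finrank_lt_finrank_of_lt
    rw [SetLike.lt_iff_le_and_exists]
    refine ⟨hkerm (k - 1) k (by omega), v, ?_, ?_⟩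
    · rw [LinearMap.mem_ker, show k = (k - 1) + 1 by omega, pow_succ', Module.End.mul_apply, hv]
      exact LinearMap.mem_ker.mp (hUker huU)
    · intro hmem
      rw [LinearMap.mem_ker, hv] at hmem
      exact hu0 hmem
  have hcol_ne : ∀ c : ℕ, c ≠ k - 1 → σ'.colLen c = σ.colLen c := by
    intro c hc
    have e1 := hσ c
    have e2 := hσ' c
    have f1 := hd' c
    have f2 := hd' (c + 1)
    rcases Nat.lt_or_ge c (k - 1) with h | h
    · have g1 := hWsmall c (by omega)
      have g2 := hWsmall (c + 1) (by omega)
      omega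
    · have hkc : k ≤ c := by omega
      have g1 := hWbig c hkc
      have g2 := hWbig (c + 1) (by omega)
      have m1 : finrank ℂ (LinearMap.ker (x ^ k)) ≤ finrank ℂ (LinearMap.ker (x ^ c)) :=
        Submodule.finrank_mono (hkerm k c hkc)
      omega
  have hcolk : σ'.colLen (k - 1) = σ.colLen (k - 1) - 1 ∧ 1 ≤ σ.colLen (k - 1) := by
    have e1 := hσ (k - 1)
    have e2 := hσ' (k - 1)
    rw [show k - 1 + 1 = k by omega] at e1 e2
    have f1 := hd' (k - 1)
    have f2 := hd' k
    have g1 := hWsmall (k - 1) le_rfl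
    have g2 := hWbig k le_rfl
    have := hstrict
    omega
  obtain ⟨hcolk1, hL1⟩ := hcolk
  have hcolk_le : σ.colLen k ≤ σ.colLen (k - 1) - 1 := by
    have h1 : σ'.colLen k ≤ σ'.colLen (k - 1) := σ'.colLen_anti (k - 1) k (by omega)
    rw [hcol_ne k (by omega), hcolk1] at h1
    exact h1
  have hrowσ : σ.rowLen (σ.colLen (k - 1) - 1) = k := by
    apply aux_rowLen_eq
    intro c
    rw [YoungDiagram.mem_iff_lt_colLen]
    constructor
    · intro h
      by_contra hc
      push_neg at hc
      have := σ.colLen_anti k c hc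
      omega
    · intro hc
      have := σ.colLen_anti c (k - 1) (by omega)
      omega
  have hrowσ' : σ'.rowLen (σ.colLen (k - 1) - 1) = k - 1 := by
    apply aux_rowLen_eq
    intro c
    rw [YoungDiagram.mem_iff_lt_colLen]
    constructor
    · intro h
      by_contra hc
      push_neg at hc
      have h2 := σ'.colLen_anti (k - 1) c hc
      rw [hcolk1] at h2
      omega
    · intro hc
      rw [hcol_ne c (by omega)]
      have := σ.colLen_anti c (k - 1) (by omega)
      omega
  refine ⟨by rw [hrowσ, hrowσ'], ?_⟩
  intro i hi
  apply aux_nat_eq_of_lt_iff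
  intro c
  rw [← YoungDiagram.mem_iff_lt_rowLen, ← YoungDiagram.mem_iff_lt_rowLen,
    YoungDiagram.mem_iff_lt_colLen, YoungDiagram.mem_iff_lt_colLen]
  by_cases hc : c = k - 1
  · subst hc
    rw [hcolk1]
    omega
  · rw [hcol_ne c hc]
end

section
/- In the setting of the normal basis for a point (v,x) of exotic Jordan type (μ,ν) with v = Σ_{i=1}^{ℓ(μ)} v_{i,μ_i}, the Jordan type of x acting on V/C[x]v is the partition (μ_1+ν_1, μ_2+ν_1, μ_2+ν_2, μ_3+ν_2, μ_3+ν_3, ...), i.e., the interleaving of (μ_{i+1}+ν_i) and (μ_i+ν_i). -/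
/-- Index set for the 'normal' basis `{v_{ij}, v*_{ij}}` attached to a bipartition `(μ,ν)`:
pairs `((i,j), b)` with `i` a (zero-based) row index, `0 ≤ j < λ_i = μ_i + ν_i` a zero-based
position in the row, and `b = false` for the vectors `v_{ij}`, `b = true` for `v*_{ij}`. -/
def NBIdx (μ ν : YoungDiagram) : Type :=
  {p : (ℕ × ℕ) × Bool // p.1.2 < μ.rowLen p.1.1 + ν.rowLen p.1.1}

open Finset Module LinearMap

section CyclicBasis

variable {K U : Type*} [Field K] [AddCommGroup U] [Module K U]

theorem finrank_ker_eq_card_of_basis {κ : Type*} [Fintype κ] (C : Basis κ K U) (f : End K U)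
    (p : κ → Prop) [DecidablePred p] (hp : ∀ a, p a → f (C a) = 0)
    (τ : {a // ¬ p a} → κ) (hτ : Function.Injective τ)
    (hf : ∀ a : {a // ¬ p a}, f (C a) = C (τ a)) :
    finrank K (ker f) = Fintype.card {a // p a} := by
  have := Module.Finite.of_basis C
  have hker : Fintype.card {a // p a} ≤ finrank K (ker f) :=
    LinearIndependent.fintype_card_le_finrank (b := fun a => (⟨C a, hp a a.2⟩ : ker f))
      (.of_comp (ker f).subtype (C.linearIndependent.comp _ Subtype.val_injective))
  have hrange : Fintype.card {a // ¬ p a} ≤ finrank K (range f) :=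
    LinearIndependent.fintype_card_le_finrank
      (b := fun a => (⟨C (τ a), hf a ▸ mem_range_self f _⟩ : range f))
      (.of_comp (range f).subtype (C.linearIndependent.comp τ hτ))
  have hcard := Fintype.card_subtype_compl p
  have := Fintype.card_subtype_le p
  rw [← finrank_eq_card_basis C] at hcard this
  have := finrank_range_add_finrank_ker f
  omega

theorem Fintype.card_sigma_fin_val_lt {ι : Type*} [Fintype ι] (L : ι → ℕ) (k : ℕ) :
    Fintype.card {a : Σ r, Fin (L r) // (a.2 : ℕ) < k} = ∑ r, min (L r) k := by
  let e : {a : Σ r, Fin (L r) // (a.2 : ℕ) < k} ≃ Σ r, {t : Fin (L r) // (t : ℕ) < k} :=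
    { toFun a := ⟨a.1.1, a.1.2, a.2⟩
      invFun a := ⟨⟨a.1, a.2.1⟩, a.2.2⟩ }
  simp [Fintype.card_congr e, Fintype.card_subtype, Fin.card_filter_val_lt]

variable {ι : Type*} [Fintype ι] {y : End K U} {g : ι → U} {L : ι → ℕ}

/-- Each chain is indexed from its bottom, so that `ker (y ^ k)` is spanned by the `C ⟨r, t⟩`
with `t < k`. -/
theorem finrank_ker_pow_eq_sum_min_of_basis (hg : ∀ r, (y ^ L r) (g r) = 0)
    (C : Basis (Σ r, Fin (L r)) K U) (hC : ∀ a, C a = (y ^ (a.2.rev : ℕ)) (g a.1)) (k : ℕ) :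
    finrank K (ker (y ^ k)) = ∑ r, min (L r) k := by
  rw [← Fintype.card_sigma_fin_val_lt L k]
  refine finrank_ker_eq_card_of_basis C _ _ (fun a ha => ?_)
    (fun a => ⟨a.1.1, a.1.2 - k, by omega⟩) ?_ (fun a => ?_)
  · rw [hC, ← Module.End.mul_apply, ← pow_add]
    exact Module.End.pow_map_zero_of_le (by simp [Fin.val_rev]; omega) (hg _)
  · rintro ⟨⟨r, t⟩, ht⟩ ⟨⟨r', t'⟩, ht'⟩ h
    simp only [Sigma.mk.inj_iff] at h
    obtain ⟨rfl, h⟩ := h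
    simp only [heq_eq_eq, Fin.mk.injEq] at h
    simp only [not_lt] at ht ht'
    congr
    omega
  · rw [hC, hC, ← Module.End.mul_apply, ← pow_add]
    congr 2
    simp [Fin.val_rev]
    omega

theorem finrank_ker_pow_eq_sum_min_of_span_iterates (hg : ∀ r, (y ^ L r) (g r) = 0)
    (hspan : ⊤ ≤ Submodule.span K (Set.range fun p : ι × ℕ => (y ^ p.2) (g p.1)))
    (hdim : ∑ r, L r ≤ finrank K U) (k : ℕ) :
    finrank K (ker (y ^ k)) = ∑ r, min (L r) k := by
  let F : (Σ r, Fin (L r)) → U := fun a => (y ^ (a.2.rev : ℕ)) (g a.1)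
  have hF : ⊤ ≤ Submodule.span K (Set.range F) := by
    refine hspan.trans (Submodule.span_le.mpr ?_)
    rintro _ ⟨⟨r, t⟩, rfl⟩
    by_cases ht : t < L r
    · refine Submodule.subset_span ⟨⟨r, Fin.rev ⟨t, ht⟩⟩, ?_⟩
      simp only [F, Fin.rev_rev]
    · simp [Module.End.pow_map_zero_of_le (not_lt.mp ht) (hg r)]
  have hli : LinearIndependent K F :=
    linearIndependent_of_top_le_span_of_card_le_finrank hF (by simpa using hdim)
  exact finrank_ker_pow_eq_sum_min_of_basis hg (Basis.mk hli hF) (fun a => by simp [F]) k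

end CyclicBasis

theorem YoungDiagram.rowLen_eq_of_colLen_eq_card {σ : YoungDiagram} {M : ℕ} {L : ℕ → ℕ}
    (hL : Antitone L) (hLM : L M = 0) (hcol : ∀ k, σ.colLen k = #{r : Fin M | k < L r})
    (r : ℕ) : σ.rowLen r = L r := by
  refine eq_of_forall_lt_iff fun j => ?_
  rw [← YoungDiagram.mem_iff_lt_rowLen, YoungDiagram.mem_iff_lt_colLen, hcol]
  by_cases hr : r < M
  · exact Tuple.lt_card_gt_iff_apply_gt_of_antitone (j := ⟨r, hr⟩) (f := fun r : Fin M => L r)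
      (hL.comp_monotone Fin.val_strictMono.monotone)
  · have := (card_filter_le univ fun r : Fin M => j < L r).trans_eq (card_fin M)
    have := hL (not_lt.mp hr)
    omega

theorem HasJordanType.rowLen_eq {U : Type*} [AddCommGroup U] [Module ℂ U] {y : End ℂ U}
    {σ : YoungDiagram} (hσ : HasJordanType y σ) {M : ℕ} {L : ℕ → ℕ} (hL : Antitone L)
    (hLM : L M = 0) (hker : ∀ k, finrank ℂ (ker (y ^ k)) = ∑ r : Fin M, min (L r) k)
    (r : ℕ) : σ.rowLen r = L r := by
  refine YoungDiagram.rowLen_eq_of_colLen_eq_card hL hLM (fun k => ?_) r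
  have hsucc : ∑ r : Fin M, min (L r) (k + 1) =
      ∑ r : Fin M, min (L r) k + #{r : Fin M | k < L r} := by
    rw [card_filter, ← sum_add_distrib]
    refine sum_congr rfl fun r _ => ?_
    split <;> omega
  rw [hσ k, hker, hker, hsucc, Nat.add_sub_cancel_left]

theorem YoungDiagram.colLen_le_card (μ : YoungDiagram) (j : ℕ) : μ.colLen j ≤ μ.card := by
  rw [colLen_eq_card]
  exact card_le_card (filter_subset _ _)

theorem YoungDiagram.rowLen_eq_zero_of_card_le {μ : YoungDiagram} {i : ℕ} (h : μ.card ≤ i) :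
    μ.rowLen i = 0 := by
  by_contra hi
  have := mem_iff_lt_colLen.mp (mem_iff_lt_rowLen.mpr (Nat.pos_of_ne_zero hi))
  have := μ.colLen_le_card 0
  omega

def interleave {α : Type*} (a b : ℕ → α) (r : ℕ) : α :=
  if Even r then a (r / 2) else b (r / 2)

section Interleave

variable {α : Type*} (a b : ℕ → α)

@[simp] theorem interleave_two_mul (i : ℕ) : interleave a b (2 * i) = a i := by
  simp [interleave]

@[simp] theorem interleave_two_mul_add_one (i : ℕ) : interleave a b (2 * i + 1) = b i := by
  simp [interleave, show (2 * i + 1) / 2 = i by omega]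

theorem sum_range_two_mul_interleave [AddCommMonoid α] (n : ℕ) :
    ∑ r ∈ range (2 * n), interleave a b r = ∑ i ∈ range n, (a i + b i) := by
  induction n with
  | zero => simp
  | succ n ih => rw [mul_add, sum_range_succ, sum_range_succ, sum_range_succ, ih, add_assoc]; simp

theorem antitone_interleave {a b : ℕ → ℕ} (hba : ∀ i, b i ≤ a i) (hab : ∀ i, a (i + 1) ≤ b i) :
    Antitone (interleave a b) := by
  refine antitone_nat_of_succ_le fun r => ?_
  obtain ⟨i, rfl | rfl⟩ := Nat.even_or_odd' r
  · simpa using hba i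
  · simpa [show 2 * i + 1 + 1 = 2 * (i + 1) by ring] using hab i

end Interleave

/-- The partition `(μ_1+ν_1, μ_2+ν_1, μ_2+ν_2, μ_3+ν_2, …)` of the paper, with zero-based rows. -/
def interlacedRowLen (μ ν : YoungDiagram) : ℕ → ℕ :=
  interleave (fun i => μ.rowLen i + ν.rowLen i) (fun i => μ.rowLen (i + 1) + ν.rowLen i)

theorem antitone_interlacedRowLen (μ ν : YoungDiagram) : Antitone (interlacedRowLen μ ν) :=
  antitone_interleave (fun i => Nat.add_le_add_right (μ.rowLen_anti _ _ i.le_succ) _)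
    (fun i => Nat.add_le_add_left (ν.rowLen_anti _ _ i.le_succ) _)

theorem sum_range_interlacedRowLen_add {μ ν : YoungDiagram} {N : ℕ} (hμN : μ.rowLen N = 0) :
    ∑ r ∈ range (2 * N), interlacedRowLen μ ν r + μ.rowLen 0 =
      2 * ∑ i ∈ range N, (μ.rowLen i + ν.rowLen i) := by
  have h1 := sum_range_succ' μ.rowLen N
  have h2 := sum_range_succ μ.rowLen N
  simp only [interlacedRowLen, sum_range_two_mul_interleave, sum_add_distrib] at h1 h2 ⊢
  omega

section Quotient

variable {K V : Type*} [Field K] [AddCommGroup V] [Module K V]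

theorem finrank_span_range_pow_apply_le {y : End K V} {u : V} {n : ℕ} (h : (y ^ n) u = 0) :
    finrank K (Submodule.span K (Set.range fun k : ℕ => (y ^ k) u)) ≤ n := by
  have : Submodule.span K (Set.range fun k : ℕ => (y ^ k) u) =
      Submodule.span K (Set.range fun k : Fin n => (y ^ (k : ℕ)) u) := by
    refine le_antisymm (Submodule.span_le.mpr ?_) (Submodule.span_mono ?_)
    · rintro _ ⟨k, rfl⟩
      by_cases hk : k < n
      · exact Submodule.subset_span ⟨⟨k, hk⟩, rfl⟩
      · simp [Module.End.pow_map_zero_of_le (not_lt.mp hk) h]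
    · rintro _ ⟨k, rfl⟩
      exact ⟨k, rfl⟩
  rw [this]
  exact (finrank_range_le_card (R := K) _).trans_eq (Fintype.card_fin n)

theorem pow_apply_quotient_mk {W : Submodule K V} {x : End K V} {x' : End K (V ⧸ W)}
    (hx' : ∀ u, x' (Submodule.Quotient.mk u) = Submodule.Quotient.mk (x u)) (t : ℕ) (u : V) :
    (x' ^ t) (Submodule.Quotient.mk u) = Submodule.Quotient.mk ((x ^ t) u) := by
  induction t with
  | zero => rfl
  | succ t ih => rw [pow_succ', pow_succ', Module.End.mul_apply, ih, hx', Module.End.mul_apply]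

variable (x : End K V) (ν : YoungDiagram) (e : ℕ → V)

/-- `partialSumRoot x ν e i` is the vector `f_{i+1}` of the one-based sketch at the top. -/
def partialSumRoot : ℕ → V
  | 0 => e 0
  | i + 1 => e (i + 1) + (x ^ (ν.rowLen i - ν.rowLen (i + 1))) (partialSumRoot i)

theorem pow_rowLen_partialSumRoot (i : ℕ) :
    (x ^ ν.rowLen i) (partialSumRoot x ν e i) = ∑ j ∈ range (i + 1), (x ^ ν.rowLen j) (e j) := by
  induction i with
  | zero => simp [partialSumRoot]
  | succ i ih =>
    rw [partialSumRoot, map_add, ← Module.End.mul_apply, ← pow_add,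
      Nat.add_sub_cancel' (ν.rowLen_anti _ _ i.le_succ), ih, sum_range_succ _ (i + 1), add_comm]

theorem pow_rowLen_sum_range {μ : YoungDiagram}
    (he : ∀ j, (x ^ (μ.rowLen j + ν.rowLen j)) (e j) = 0) {m n : ℕ} (hmn : m ≤ n) :
    (x ^ μ.rowLen m) (∑ j ∈ range n, (x ^ ν.rowLen j) (e j)) =
      (x ^ μ.rowLen m) (∑ j ∈ range m, (x ^ ν.rowLen j) (e j)) := by
  rw [← sum_range_add_sum_Ico _ hmn, map_add, add_eq_left, map_sum]
  refine sum_eq_zero fun j hj => ?_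
  rw [← Module.End.mul_apply, ← pow_add]
  exact Module.End.pow_map_zero_of_le
    (Nat.add_le_add_right (μ.rowLen_anti _ _ (mem_Ico.mp hj).1) _) (he j)

theorem top_le_span_iterates_quotient_mk {μ : YoungDiagram} {N : ℕ} (hμN : μ.rowLen N = 0)
    (hνN : ν.rowLen N = 0) {s : ℕ → V}
    (hs : ∀ i, (x ^ (μ.rowLen i + ν.rowLen i)) (s i) = 0)
    (he : ∀ i, (x ^ (μ.rowLen i + ν.rowLen i)) (e i) = 0)
    (hspan : ⊤ ≤ Submodule.span K (Set.range (fun p : ℕ × ℕ => (x ^ p.2) (s p.1)) ∪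
      Set.range fun p : ℕ × ℕ => (x ^ p.2) (e p.1)))
    {W : Submodule K V} {x' : End K (V ⧸ W)}
    (hx' : ∀ u, x' (Submodule.Quotient.mk u) = Submodule.Quotient.mk (x u)) :
    ⊤ ≤ Submodule.span K (Set.range fun p : Fin (2 * N) × ℕ => (x' ^ p.2)
      (interleave (fun i => Submodule.Quotient.mk (p := W) (s i))
        (fun i => Submodule.Quotient.mk (partialSumRoot x ν e i)) p.1)) := by
  set f := partialSumRoot x ν e
  set P := Submodule.span K (Set.range fun p : Fin (2 * N) × ℕ => (x' ^ p.2)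
    (interleave (fun i => Submodule.Quotient.mk (p := W) (s i))
      (fun i => Submodule.Quotient.mk (f i)) p.1))
  have hmk := pow_apply_quotient_mk hx'
  have hvanish : ∀ i, N ≤ i → ∀ w : V, (x ^ (μ.rowLen i + ν.rowLen i)) w = w := by
    intro i hi w
    rw [Nat.eq_zero_of_le_zero ((μ.rowLen_anti _ _ hi).trans hμN.le),
      Nat.eq_zero_of_le_zero ((ν.rowLen_anti _ _ hi).trans hνN.le), pow_zero, Module.End.one_apply]
  have hfP : ∀ i < N, ∀ t, Submodule.Quotient.mk ((x ^ t) (f i)) ∈ P := fun i hi t =>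
    Submodule.subset_span ⟨(⟨2 * i + 1, by omega⟩, t), by simp [hmk]⟩
  have hsP : ∀ i t, Submodule.Quotient.mk ((x ^ t) (s i)) ∈ P := by
    intro i t
    by_cases hi : i < N
    · exact Submodule.subset_span ⟨(⟨2 * i, by omega⟩, t), by simp [hmk]⟩
    · rw [← hvanish i (not_lt.mp hi) (s i), hs, map_zero, Submodule.Quotient.mk_zero]
      exact P.zero_mem
  have heP : ∀ i t, Submodule.Quotient.mk ((x ^ t) (e i)) ∈ P := by
    intro i t
    by_cases hi : i < N
    · cases i with
      | zero => exact hfP 0 hi t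
      | succ i =>
        have : e (i + 1) = f (i + 1) - (x ^ (ν.rowLen i - ν.rowLen (i + 1))) (f i) := by
          simp [f, partialSumRoot]
        rw [this, map_sub, ← Module.End.mul_apply, ← pow_add, Submodule.Quotient.mk_sub]
        exact sub_mem (hfP _ hi t) (hfP _ (by omega) _)
    · rw [← hvanish i (not_lt.mp hi) (e i), he, map_zero, Submodule.Quotient.mk_zero]
      exact P.zero_mem
  intro q _
  obtain ⟨u, rfl⟩ := Submodule.mkQ_surjective W q
  refine (hspan.trans (Submodule.span_le.mpr ?_) (Submodule.mem_top (x := u)) :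
    u ∈ P.comap W.mkQ)
  rintro _ (⟨⟨i, t⟩, rfl⟩ | ⟨⟨i, t⟩, rfl⟩)
  exacts [hsP i t, heP i t]

theorem finrank_ker_pow_quotient_eq_sum_min [FiniteDimensional K V] {μ : YoungDiagram} {N : ℕ}
    (hμN : μ.rowLen N = 0) (hνN : ν.rowLen N = 0) {s : ℕ → V}
    (hs : ∀ i, (x ^ (μ.rowLen i + ν.rowLen i)) (s i) = 0)
    (he : ∀ i, (x ^ (μ.rowLen i + ν.rowLen i)) (e i) = 0)
    (hspan : ⊤ ≤ Submodule.span K (Set.range (fun p : ℕ × ℕ => (x ^ p.2) (s p.1)) ∪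
      Set.range fun p : ℕ × ℕ => (x ^ p.2) (e p.1)))
    (hdim : 2 * ∑ i ∈ range N, (μ.rowLen i + ν.rowLen i) ≤ finrank K V)
    {v : V} (hv : v = ∑ i ∈ range N, (x ^ ν.rowLen i) (e i))
    {W : Submodule K V} (hW : W = Submodule.span K (Set.range fun k : ℕ => (x ^ k) v))
    {x' : End K (V ⧸ W)}
    (hx' : ∀ u, x' (Submodule.Quotient.mk u) = Submodule.Quotient.mk (x u)) (k : ℕ) :
    finrank K (ker (x' ^ k)) = ∑ r : Fin (2 * N), min (interlacedRowLen μ ν r) k := by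
  have hfW : ∀ i < N, (x ^ (μ.rowLen (i + 1) + ν.rowLen i)) (partialSumRoot x ν e i) ∈ W := by
    intro i hi
    rw [pow_add, Module.End.mul_apply, pow_rowLen_partialSumRoot,
      ← pow_rowLen_sum_range x ν e he hi, ← hv]
    exact hW ▸ Submodule.subset_span ⟨_, rfl⟩
  refine finrank_ker_pow_eq_sum_min_of_span_iterates
    (g := fun r : Fin (2 * N) => interleave (fun i => Submodule.Quotient.mk (p := W) (s i))
      (fun i => Submodule.Quotient.mk (partialSumRoot x ν e i)) r) ?_
    (top_le_span_iterates_quotient_mk x ν e hμN hνN hs he hspan hx') ?_ k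
  · rintro ⟨r, hr⟩
    obtain ⟨i, rfl | rfl⟩ := Nat.even_or_odd' r
    · simp [interlacedRowLen, pow_apply_quotient_mk hx', hs]
    · simpa [interlacedRowLen, pow_apply_quotient_mk hx', Submodule.Quotient.mk_eq_zero]
        using hfW i (by omega)
  · have hWle : finrank K W ≤ μ.rowLen 0 := hW ▸ finrank_span_range_pow_apply_le (by
      rw [hv, pow_rowLen_sum_range x ν e he (Nat.zero_le N)]
      simp)
    have := Submodule.finrank_quotient_add_finrank W
    have := sum_range_interlacedRowLen_add (ν := ν) hμN
    rw [Fin.sum_univ_eq_sum_range (fun r => interlacedRowLen μ ν r)]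
    omega

end Quotient

section NormalBasis

variable {K V : Type*} [Field K] [AddCommGroup V] [Module K V] {μ ν : YoungDiagram}

theorem pow_apply_eq_of_map_eq_succ {y : End K V} {c : ℕ → V} (hc : ∀ t, y (c t) = c (t + 1))
    (t : ℕ) : (y ^ t) (c 0) = c t := by
  induction t with
  | zero => rfl
  | succ t ih => rw [pow_succ', Module.End.mul_apply, ih, hc]

def NBIdx.equivSigma {N : ℕ} (hμN : μ.rowLen N = 0) (hνN : ν.rowLen N = 0) :
    NBIdx μ ν ≃ Bool × Σ i : Fin N, Fin (μ.rowLen i + ν.rowLen i) where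
  toFun a := (a.1.2, ⟨⟨a.1.1.1, by
    by_contra h
    have := μ.rowLen_anti _ _ (not_lt.mp h)
    have := ν.rowLen_anti _ _ (not_lt.mp h)
    have := a.2
    omega⟩, ⟨a.1.1.2, a.2⟩⟩)
  invFun p := ⟨((p.2.1, p.2.2), p.1), p.2.2.2⟩

theorem NBIdx.finrank_eq (B : Basis (NBIdx μ ν) K V) {N : ℕ} (hμN : μ.rowLen N = 0)
    (hνN : ν.rowLen N = 0) :
    finrank K V = 2 * ∑ i ∈ range N, (μ.rowLen i + ν.rowLen i) := by
  rw [finrank_eq_card_basis (B.reindex (equivSigma hμN hνN))]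
  simp [Fin.sum_univ_eq_sum_range (fun i => μ.rowLen i + ν.rowLen i)]

variable (B : Basis (NBIdx μ ν) K V)

/-- `vChain B i t = v_{i, λ_i - t}` in the one-based notation of the paper, and `0` once
`t ≥ λ_i`. -/
noncomputable def vChain (i t : ℕ) : V :=
  if h : t < μ.rowLen i + ν.rowLen i then
    B ⟨((i, μ.rowLen i + ν.rowLen i - 1 - t), false), by dsimp only; omega⟩
  else 0

noncomputable def vStarChain (i t : ℕ) : V :=
  if h : t < μ.rowLen i + ν.rowLen i then B ⟨((i, t), true), h⟩ else 0

variable {x : End K V}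

theorem map_vChain
    (hv0 : ∀ i (h : 0 < μ.rowLen i + ν.rowLen i), x (B ⟨((i, 0), false), h⟩) = 0)
    (hv : ∀ i j (h : j + 1 < μ.rowLen i + ν.rowLen i),
      x (B ⟨((i, j + 1), false), h⟩) = B ⟨((i, j), false), Nat.lt_of_succ_lt h⟩) (i t : ℕ) :
    x (vChain B i t) = vChain B i (t + 1) := by
  unfold vChain
  by_cases h : t + 1 < μ.rowLen i + ν.rowLen i
  · rw [dif_pos h, dif_pos (by omega)]
    convert hv i (μ.rowLen i + ν.rowLen i - 2 - t) (by omega) using 4 <;>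
      exact congrArg B (Subtype.ext (by simp; omega))
  · rw [dif_neg h]
    split
    · convert hv0 i (by omega) using 4
      exact congrArg B (Subtype.ext (by simp; omega))
    · exact map_zero x

theorem map_vStarChain
    (hs : ∀ i j (h : j + 1 < μ.rowLen i + ν.rowLen i),
      x (B ⟨((i, j), true), Nat.lt_of_succ_lt h⟩) = B ⟨((i, j + 1), true), h⟩)
    (hstop : ∀ i (h : 0 < μ.rowLen i + ν.rowLen i),
      x (B ⟨((i, μ.rowLen i + ν.rowLen i - 1), true), Nat.sub_lt h Nat.one_pos⟩) = 0)
    (i t : ℕ) : x (vStarChain B i t) = vStarChain B i (t + 1) := by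
  unfold vStarChain
  by_cases h : t + 1 < μ.rowLen i + ν.rowLen i
  · rw [dif_pos h, dif_pos (by omega)]
    exact hs i t h
  · rw [dif_neg h]
    split
    · convert hstop i (by omega) using 4
      exact congrArg B (Subtype.ext (by simp; omega))
    · exact map_zero x

theorem range_subset_iterates_vChain (hchain : ∀ i t, x (vChain B i t) = vChain B i (t + 1))
    (hstar : ∀ i t, x (vStarChain B i t) = vStarChain B i (t + 1)) :
    Set.range B ⊆ (Set.range fun p : ℕ × ℕ => (x ^ p.2) (vStarChain B p.1 0)) ∪
      Set.range fun p : ℕ × ℕ => (x ^ p.2) (vChain B p.1 0) := by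
  rintro _ ⟨⟨⟨⟨i, j⟩, b⟩, h⟩, rfl⟩
  have h : j < μ.rowLen i + ν.rowLen i := h
  cases b
  · refine Or.inr ⟨(i, μ.rowLen i + ν.rowLen i - 1 - j), ?_⟩
    dsimp only
    rw [pow_apply_eq_of_map_eq_succ (hchain i), vChain, dif_pos (by omega)]
    exact congrArg B (Subtype.ext (by simp; omega))
  · refine Or.inl ⟨(i, j), ?_⟩
    dsimp only
    rw [pow_apply_eq_of_map_eq_succ (hstar i), vStarChain, dif_pos h]

theorem dite_rowLen_pos_eq_vChain (i : ℕ) :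
    (if h : 0 < μ.rowLen i then
      B ⟨((i, μ.rowLen i - 1), false),
        lt_of_lt_of_le (Nat.sub_lt h Nat.one_pos) (Nat.le_add_right _ _)⟩ else 0) =
      vChain B i (ν.rowLen i) := by
  unfold vChain
  split_ifs with h h'
  · exact congrArg B (Subtype.ext (by simp; omega))
  · omega
  · omega
  · rfl

end NormalBasis

/-- with `(v,x)` in normal form for the bipartition `(μ,ν)` (so `x` acts on the
normal basis in the standard way and `v = Σ_i v_{i,μ_i}`), the Jordan type of `x` on
`V / ℂ[x]v` is the interleaving `(μ_1+ν_1, μ_2+ν_1, μ_2+ν_2, μ_3+ν_2, ...)`, i.e. with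
zero-based rows: row `2i` has length `μ_i + ν_i` and row `2i+1` has length `μ_{i+1} + ν_i`. -/
theorem normal_basis_jordan_type_mod_cyclic (μ ν : YoungDiagram) {V : Type*} [AddCommGroup V]
    [Module ℂ V] (B : Module.Basis (NBIdx μ ν) ℂ V) (x : Module.End ℂ V)
    (hv0 : ∀ i (h : 0 < μ.rowLen i + ν.rowLen i), x (B ⟨((i, 0), false), h⟩) = 0)
    (hv : ∀ i j (h : j + 1 < μ.rowLen i + ν.rowLen i),
      x (B ⟨((i, j + 1), false), h⟩) = B ⟨((i, j), false), Nat.lt_of_succ_lt h⟩)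
    (hs : ∀ i j (h : j + 1 < μ.rowLen i + ν.rowLen i),
      x (B ⟨((i, j), true), Nat.lt_of_succ_lt h⟩) = B ⟨((i, j + 1), true), h⟩)
    (hstop : ∀ i (h : 0 < μ.rowLen i + ν.rowLen i),
      x (B ⟨((i, μ.rowLen i + ν.rowLen i - 1), true), Nat.sub_lt h Nat.one_pos⟩) = 0)
    (v : V)
    (hvdef : v = ∑ i ∈ Finset.range (μ.card + ν.card + 1),
      (if h : 0 < μ.rowLen i then
        B ⟨((i, μ.rowLen i - 1), false), lt_of_lt_of_le (Nat.sub_lt h Nat.one_pos) (Nat.le_add_right _ _)⟩ else 0)) :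
    ∀ x' : Module.End ℂ (V ⧸ Submodule.span ℂ (Set.range fun k : ℕ => (x ^ k) v)),
      (∀ u : V, x' (Submodule.Quotient.mk u) = Submodule.Quotient.mk (x u)) →
      ∀ σ : YoungDiagram, HasJordanType x' σ →
        ∀ i : ℕ, σ.rowLen (2 * i) = μ.rowLen i + ν.rowLen i ∧
          σ.rowLen (2 * i + 1) = μ.rowLen (i + 1) + ν.rowLen i := by
  intro x' hx' σ hσ i
  have hμN := μ.rowLen_eq_zero_of_card_le (i := μ.card + ν.card + 1) (by omega)
  have hνN := ν.rowLen_eq_zero_of_card_le (i := μ.card + ν.card + 1) (by omega)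
  have hchain := map_vChain B hv0 hv
  have hstar := map_vStarChain B hs hstop
  have : FiniteDimensional ℂ V := Module.Finite.of_basis (B.reindex (NBIdx.equivSigma hμN hνN))
  have hker := finrank_ker_pow_quotient_eq_sum_min x ν (fun i => vChain B i 0) hμN hνN
    (s := fun i => vStarChain B i 0)
    (fun i => by rw [pow_apply_eq_of_map_eq_succ (hstar i), vStarChain, dif_neg (lt_irrefl _)])
    (fun i => by rw [pow_apply_eq_of_map_eq_succ (hchain i), vChain, dif_neg (lt_irrefl _)])
    (B.span_eq ▸ Submodule.span_mono (range_subset_iterates_vChain B hchain hstar))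
    (NBIdx.finrank_eq B hμN hνN).ge
    (hvdef.trans (sum_congr rfl fun i _ => (dite_rowLen_pos_eq_vChain B i).trans
      (pow_apply_eq_of_map_eq_succ (hchain i) _).symm)) rfl hx'
  have hrow := hσ.rowLen_eq (antitone_interlacedRowLen μ ν)
    (by simp [interlacedRowLen, hμN, hνN]) hker
  exact ⟨by simpa [interlacedRowLen] using hrow (2 * i),
    by simpa [interlacedRowLen] using hrow (2 * i + 1)⟩
end

section
/- Let x be a nilpotent endomorphism of a finite-dimensional vector space V' with Jordan type ρ, and let H ⊂ V' be an x-stable hyperplane. Then the Jordan type ρ' of x restricted to H is obtained from ρ by deleting the last box of the l-th column of ρ, where l is the maximal integer such that H ⊇ im(x) + ker(x^{l-1}). -/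
/-!
Since `x' = x|_H`, `ker x'^k = ker x^k ∩ H`. As `ker x^{l-1} ⊆ H`, this intersection is all of
`ker x^k` for `k < l`; for `k ≥ l` the kernel `ker x^k ⊇ ker x^l` is not contained in the
hyperplane `H`, so the intersection has codimension one in it. Taking successive differences, the
columns of `ρ'` agree with those of `ρ` except the `l`-th one, which is one box shorter; on rows
this says exactly that the last box of the `l`-th column has been removed.
-/

namespace YoungDiagram

theorem mem_iff_of_colLen_eq_pred {μ ν : YoungDiagram} {m : ℕ}
    (hm : ν.colLen m = μ.colLen m - 1) (hne : ∀ j ≠ m, ν.colLen j = μ.colLen j) (i j : ℕ) :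
    (i, j) ∈ ν ↔ (i, j) ∈ μ ∧ (i, j) ≠ (μ.colLen m - 1, m) := by
  rw [mem_iff_lt_colLen, mem_iff_lt_colLen, Ne, Prod.mk.injEq]
  rcases eq_or_ne j m with rfl | hj
  · rw [hm]; omega
  · rw [hne j hj]; tauto

theorem rowLen_of_colLen_eq_pred {μ ν : YoungDiagram} {m : ℕ} (hpos : 0 < μ.colLen m)
    (hm : ν.colLen m = μ.colLen m - 1) (hne : ∀ j ≠ m, ν.colLen j = μ.colLen j) :
    ν.rowLen (μ.colLen m - 1) = μ.rowLen (μ.colLen m - 1) - 1 ∧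
      ∀ i ≠ μ.colLen m - 1, ν.rowLen i = μ.rowLen i := by
  have hmem := mem_iff_of_colLen_eq_pred hm hne
  set r := μ.colLen m - 1
  refine ⟨?_, fun i hi ↦ eq_of_forall_lt_iff fun j ↦ ?_⟩
  · have hlast : μ.rowLen r = m + 1 := by
      have hin : (r, m) ∈ μ := mem_iff_lt_colLen.2 (by omega)
      have hout : (r, m + 1) ∉ μ := by
        rw [mem_iff_lt_colLen, ← hne (m + 1) (by omega)]
        have := ν.colLen_anti m (m + 1) (by omega)
        omega
      rw [mem_iff_lt_rowLen] at hin hout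
      omega
    refine eq_of_forall_lt_iff fun j ↦ ?_
    rw [← mem_iff_lt_rowLen, hmem, mem_iff_lt_rowLen, hlast, Ne, Prod.mk.injEq]
    omega
  · rw [← mem_iff_lt_rowLen, ← mem_iff_lt_rowLen, hmem, Ne, Prod.mk.injEq]
    tauto

end YoungDiagram

theorem Module.End.ker_pow_le_ker_pow_of_le {R M : Type*} [Semiring R] [AddCommMonoid M]
    [Module R M] (f : Module.End R M) {a b : ℕ} (hab : a ≤ b) :
    LinearMap.ker (f ^ a) ≤ LinearMap.ker (f ^ b) := by
  obtain ⟨c, rfl⟩ := Nat.exists_eq_add_of_le hab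
  rw [add_comm, pow_add]
  exact LinearMap.ker_le_ker_comp _ _

theorem Module.End.finrank_ker_pow_of_restrict {R M : Type*} [Ring R] [AddCommGroup M]
    [Module R M] {H : Submodule R M} (f : Module.End R M) (f' : Module.End R H)
    (hf' : ∀ v, (f' v : M) = f v) (k : ℕ) :
    Module.finrank R (LinearMap.ker (f' ^ k)) =
      Module.finrank R (LinearMap.ker (f ^ k) ⊓ H : Submodule R M) := by
  have hpow : ∀ v, ((f' ^ k) v : M) = (f ^ k) v := by
    induction k with
    | zero => simp
    | succ n ih => intro v; rw [pow_succ, pow_succ, Module.End.mul_apply, ih, hf']; rfl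
  have hker : LinearMap.ker (f' ^ k) = (LinearMap.ker (f ^ k)).comap H.subtype := by
    ext v
    simp only [LinearMap.mem_ker, Submodule.mem_comap, Submodule.subtype_apply, ← hpow,
      Submodule.coe_eq_zero]
  rw [hker, ← Submodule.finrank_map_subtype_eq, Submodule.map_comap_subtype, inf_comm]

section DivisionRing

variable {K V : Type*} [DivisionRing K] [AddCommGroup V] [Module K V]

theorem Submodule.finrank_inf_add_one_of_not_le [FiniteDimensional K V] {W H : Submodule K V}
    (hH : Module.finrank K V = Module.finrank K H + 1) (hW : ¬ W ≤ H) :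
    Module.finrank K (W ⊓ H : Submodule K V) + 1 = Module.finrank K W := by
  have hlt : Module.finrank K H < Module.finrank K (W ⊔ H : Submodule K V) :=
    Submodule.finrank_lt_finrank_of_lt (lt_of_le_of_ne le_sup_right fun h ↦ hW (h ▸ le_sup_left))
  have hle := (W ⊔ H).finrank_le
  have := Submodule.finrank_sup_add_finrank_inf_eq W H
  omega

theorem colLen_of_restrict_hyperplane [FiniteDimensional K V] {H : Submodule K V}
    (hH : Module.finrank K V = Module.finrank K H + 1) (f : Module.End K V)
    (f' : Module.End K H) (hf' : ∀ v, (f' v : V) = f v) {m : ℕ}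
    (hm : LinearMap.ker (f ^ m) ≤ H) (hm1 : ¬ LinearMap.ker (f ^ (m + 1)) ≤ H)
    {μ ν : YoungDiagram}
    (hμ : ∀ k, μ.colLen k = Module.finrank K (LinearMap.ker (f ^ (k + 1))) -
      Module.finrank K (LinearMap.ker (f ^ k)))
    (hν : ∀ k, ν.colLen k = Module.finrank K (LinearMap.ker (f' ^ (k + 1))) -
      Module.finrank K (LinearMap.ker (f' ^ k))) :
    0 < μ.colLen m ∧ ν.colLen m = μ.colLen m - 1 ∧ ∀ j ≠ m, ν.colLen j = μ.colLen j := by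
  simp only [Module.End.finrank_ker_pow_of_restrict f f' hf'] at hν
  have hlow : ∀ k ≤ m, (LinearMap.ker (f ^ k) ⊓ H : Submodule K V) = LinearMap.ker (f ^ k) :=
    fun k hk ↦ inf_eq_left.2 ((f.ker_pow_le_ker_pow_of_le hk).trans hm)
  have hhigh : ∀ k, m < k → Module.finrank K (LinearMap.ker (f ^ k) ⊓ H : Submodule K V) + 1 =
      Module.finrank K (LinearMap.ker (f ^ k)) :=
    fun k hk ↦ Submodule.finrank_inf_add_one_of_not_le hH
      fun h ↦ hm1 ((f.ker_pow_le_ker_pow_of_le hk).trans h)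
  have hmono : Module.finrank K (LinearMap.ker (f ^ m) ⊓ H : Submodule K V) ≤
      Module.finrank K (LinearMap.ker (f ^ (m + 1)) ⊓ H : Submodule K V) :=
    Submodule.finrank_mono (inf_le_inf_right H (f.ker_pow_le_ker_pow_of_le m.le_succ))
  have hm' := hhigh (m + 1) m.lt_succ_self
  rw [hlow m le_rfl] at hmono
  refine ⟨by rw [hμ]; omega, by rw [hμ, hν, hlow m le_rfl]; omega, fun j hj ↦ ?_⟩
  rw [hμ, hν]
  rcases lt_or_gt_of_ne hj with hj | hj
  · rw [hlow j hj.le, hlow (j + 1) hj]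
  · have := hhigh j hj
    have := hhigh (j + 1) (by omega)
    omega

end DivisionRing

theorem jordan_type_hyperplane_restriction_general {V' : Type*} [AddCommGroup V'] [Module ℂ V']
    [FiniteDimensional ℂ V'] (x : Module.End ℂ V')
    (ρ : YoungDiagram) (hρ : HasJordanType x ρ)
    (H : Submodule ℂ V') (hcodim : Module.finrank ℂ V' = Module.finrank ℂ H + 1)
    (l : ℕ) (hl : 1 ≤ l)
    (hl1 : LinearMap.range x ⊔ LinearMap.ker (x ^ (l - 1)) ≤ H)
    (hl2 : ¬ (LinearMap.range x ⊔ LinearMap.ker (x ^ l) ≤ H)) :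
    ∀ x' : Module.End ℂ H, (∀ v : H, (x' v : V') = x v) →
      ∀ ρ' : YoungDiagram, HasJordanType x' ρ' →
        ρ'.rowLen (ρ.colLen (l - 1) - 1) = ρ.rowLen (ρ.colLen (l - 1) - 1) - 1 ∧
        ∀ i : ℕ, i ≠ ρ.colLen (l - 1) - 1 → ρ'.rowLen i = ρ.rowLen i := by
  intro x' hx' ρ' hρ'
  obtain ⟨m, rfl⟩ := Nat.exists_eq_add_of_le' hl
  rw [Nat.add_sub_cancel] at hl1 ⊢
  have hker : ¬ LinearMap.ker (x ^ (m + 1)) ≤ H :=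
    fun h ↦ hl2 (sup_le (le_sup_left.trans hl1) h)
  obtain ⟨hpos, hm, hne⟩ :=
    colLen_of_restrict_hyperplane hcodim x x' hx' (le_sup_right.trans hl1) hker hρ hρ'
  exact YoungDiagram.rowLen_of_colLen_eq_pred hpos hm hne

/-- if `x` is nilpotent with Jordan type `ρ` on `V'` and `H` is an `x`-stable
hyperplane, then the Jordan type `ρ'` of `x|_H` is obtained from `ρ` by deleting the last box
of the `l`-th column, where `l` is maximal with `H ⊇ im(x) + ker(x^{l-1})`. -/
theorem jordan_type_hyperplane_restriction {V' : Type*} [AddCommGroup V'] [Module ℂ V']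
    [FiniteDimensional ℂ V'] (x : Module.End ℂ V') (hx : IsNilpotent x)
    (ρ : YoungDiagram) (hρ : HasJordanType x ρ)
    (H : Submodule ℂ V') (hcodim : Module.finrank ℂ V' = Module.finrank ℂ H + 1)
    (hstab : ∀ v ∈ H, x v ∈ H)
    (l : ℕ) (hl : 1 ≤ l)
    (hl1 : LinearMap.range x ⊔ LinearMap.ker (x ^ (l - 1)) ≤ H)
    (hl2 : ¬ (LinearMap.range x ⊔ LinearMap.ker (x ^ l) ≤ H)) :
    ∀ x' : Module.End ℂ H, (∀ v : H, (x' v : V') = x v) →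
      ∀ ρ' : YoungDiagram, HasJordanType x' ρ' →
        ρ'.rowLen (ρ.colLen (l - 1) - 1) = ρ.rowLen (ρ.colLen (l - 1) - 1) - 1 ∧
        ∀ i : ℕ, i ≠ ρ.colLen (l - 1) - 1 → ρ'.rowLen i = ρ.rowLen i :=
  jordan_type_hyperplane_restriction_general x ρ hρ H hcodim l hl hl1 hl2
end

section
/- Let x be nilpotent on V', U ⊂ V' a 1-dimensional subspace of ker(x) contained in x^{k-1}(V') but not in x^k(V'), with Jordan type of x on V' equal to σ. Then the Jordan type of x on V'/U is obtained from σ by decreasing by 1 the part σ_j, where j is maximal such that σ_j ≥ k; moreover σ_j = k for this j is not required — the removed box is the last box of column k. -/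
/-!
`ker x'^m` is the image of `(x^m)⁻¹(U)` in `V'/U`, so
`dim ker x'^m = dim ker x^m + dim (U ∩ im x^m) - 1`, and `U ∩ im x^m` is all of the line `U`
exactly when `m < k`. Hence passing to `V'/U` lowers `dim ker x^m` by one precisely for `m ≥ k`,
so only column `k` (index `k - 1`, columns being counted from `0`) loses a box. Since `σ'` is again
a Young diagram, that box is the last one of its column, which ends row `σ.colLen (k - 1) - 1`.
-/

open Module LinearMap Submodule

section FiniteDimensional

variable {K V W : Type*} [DivisionRing K] [AddCommGroup V] [Module K V] [FiniteDimensional K V]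
  [AddCommGroup W] [Module K W]

theorem LinearMap.finrank_map_add_finrank_ker (f : V →ₗ[K] W) {p : Submodule K V}
    (h : ker f ≤ p) : finrank K (p.map f) + finrank K (ker f) = finrank K p := by
  have := (f.domRestrict p).finrank_range_add_finrank_ker
  rwa [range_domRestrict, ker_domRestrict, (comapSubtypeEquivOfLe h).finrank_eq] at this

theorem LinearMap.finrank_comap (f : V →ₗ[K] W) (q : Submodule K W) :
    finrank K (q.comap f) = finrank K (range f ⊓ q : Submodule K W) + finrank K (ker f) := by
  rw [← map_comap_eq, f.finrank_map_add_finrank_ker (ker_le_comap f)]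

theorem Submodule.finrank_ker_mapQ_add_finrank (f : Module.End K V) (U : Submodule K V)
    (h : U ≤ U.comap f) :
    finrank K (ker (U.mapQ U f h)) + finrank K U =
      finrank K (range f ⊓ U : Submodule K V) + finrank K (ker f) := by
  have := U.mkQ.finrank_map_add_finrank_ker (p := U.comap f) (by rwa [ker_mkQ])
  rw [ker_mkQ] at this
  rw [ker_mapQ, this, f.finrank_comap]

open Classical in
theorem Submodule.finrank_inf_of_finrank_eq_one {U : Submodule K V} (hU : finrank K U = 1)
    (S : Submodule K V) : finrank K (S ⊓ U : Submodule K V) = if U ≤ S then 1 else 0 := by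
  split_ifs with h
  · rwa [inf_eq_right.mpr h]
  · have := finrank_lt_finrank_of_lt (inf_le_right.lt_of_ne fun e ↦ h (inf_eq_right.1 e))
    omega

end FiniteDimensional

namespace YoungDiagram

theorem rowLen_eq_of_forall_mem_iff {μ : YoungDiagram} {i n : ℕ}
    (h : ∀ j, (i, j) ∈ μ ↔ j < n) : μ.rowLen i = n :=
  eq_of_forall_lt_iff fun j ↦ by rw [← mem_iff_lt_rowLen, h]

theorem rowLen_of_mem_iff_mem_and_ne {μ ν : YoungDiagram} {r c : ℕ} (hrc : (r, c) ∈ μ)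
    (h : ∀ i j, (i, j) ∈ ν ↔ (i, j) ∈ μ ∧ (i, j) ≠ (r, c)) :
    ν.rowLen r = μ.rowLen r - 1 ∧ ∀ i, i ≠ r → ν.rowLen i = μ.rowLen i := by
  have hν : ∀ j, (r, j) ∈ ν ↔ j < c := fun j ↦ by
    refine ⟨fun hj ↦ ?_, fun hj ↦ (h r j).2 ⟨μ.up_left_mem le_rfl hj.le hrc, by simp [hj.ne]⟩⟩
    by_contra! hcj
    exact ((h r c).1 (ν.up_left_mem le_rfl hcj hj)).2 rfl
  have hμ : ∀ j, (r, j) ∈ μ ↔ j < c + 1 := fun j ↦ by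
    refine ⟨fun hj ↦ ?_, fun hj ↦ μ.up_left_mem le_rfl (Nat.lt_succ_iff.1 hj) hrc⟩
    by_contra! hcj
    have := (hν (c + 1)).1 <| (h r _).2 ⟨μ.up_left_mem le_rfl hcj hj, by simp⟩
    omega
  refine ⟨by rw [rowLen_eq_of_forall_mem_iff hν, rowLen_eq_of_forall_mem_iff hμ]; rfl,
    fun i hi ↦ rowLen_eq_of_forall_mem_iff fun j ↦ ?_⟩
  rw [h, ← mem_iff_lt_rowLen]
  simp [hi]

theorem rowLen_of_colLen_add_one {μ ν : YoungDiagram} {c : ℕ}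
    (hc : ν.colLen c + 1 = μ.colLen c) (h : ∀ j, j ≠ c → ν.colLen j = μ.colLen j) :
    ν.rowLen (μ.colLen c - 1) = μ.rowLen (μ.colLen c - 1) - 1 ∧
      ∀ i, i ≠ μ.colLen c - 1 → ν.rowLen i = μ.rowLen i := by
  refine rowLen_of_mem_iff_mem_and_ne (mem_iff_lt_colLen (j := c) |>.2 (by omega)) fun i j ↦ ?_
  rw [mem_iff_lt_colLen, mem_iff_lt_colLen]
  by_cases hj : j = c
  · subst hj
    simp only [ne_eq, Prod.mk.injEq, and_true]
    omega
  · simp [h j hj, hj]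

end YoungDiagram

theorem spaltenstein_quotient_lemma_general {V' : Type*} [AddCommGroup V'] [Module ℂ V']
    [FiniteDimensional ℂ V'] (x : Module.End ℂ V')
    (σ : YoungDiagram) (hσ : HasJordanType x σ)
    (U : Submodule ℂ V') (hU1 : Module.finrank ℂ U = 1) (hUker : U ≤ LinearMap.ker x)
    (k : ℕ)
    (hk1 : U ≤ LinearMap.range (x ^ (k - 1))) (hk2 : ¬ U ≤ LinearMap.range (x ^ k)) :
    ∀ x' : Module.End ℂ (V' ⧸ U),
      (∀ v : V', x' (Submodule.Quotient.mk v) = Submodule.Quotient.mk (x v)) →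
      ∀ σ' : YoungDiagram, HasJordanType x' σ' →
        σ'.rowLen (σ.colLen (k - 1) - 1) = σ.rowLen (σ.colLen (k - 1) - 1) - 1 ∧
        ∀ i : ℕ, i ≠ σ.colLen (k - 1) - 1 → σ'.rowLen i = σ.rowLen i := by
  intro x' hx' σ' hσ'
  have hk : k ≠ 0 := by rintro rfl; simp [Module.End.one_eq_id] at hk2
  have hinv : U ≤ U.comap x := fun u hu ↦ by simp [mem_ker.1 (hUker hu)]
  obtain rfl : x' = U.mapQ U x hinv := linearMap_qext _ (LinearMap.ext hx')
  have hrange (m : ℕ) : U ≤ range (x ^ m) ↔ m < k :=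
    ⟨fun h ↦ by_contra fun hm ↦ hk2 (h.trans (x.iterateRange.monotone (not_lt.1 hm))),
      fun hm ↦ hk1.trans (x.iterateRange.monotone (by omega))⟩
  have hker (m : ℕ) : finrank ℂ (ker (U.mapQ U x hinv ^ m)) + 1 =
      (if m < k then 1 else 0) + finrank ℂ (ker (x ^ m)) := by
    have := U.finrank_ker_mapQ_add_finrank (x ^ m) (U.le_comap_pow_of_le_comap hinv m)
    rw [mapQ_pow, hU1, finrank_inf_of_finrank_eq_one hU1] at this
    simpa only [hrange] using this
  have hcol (j : ℕ) : σ'.colLen j + (if j = k - 1 then 1 else 0) = σ.colLen j := by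
    -- monotonicity of `dim ker x'^m` keeps the truncated subtraction in column `k - 1` honest
    have hmono : ker (U.mapQ U x hinv ^ j) ≤ ker (U.mapQ U x hinv ^ (j + 1)) :=
      (U.mapQ U x hinv).iterateKer.monotone j.le_succ
    have hdim := finrank_mono hmono
    have hj := hker j
    have hj' := hker (j + 1)
    rw [hσ, hσ']
    split_ifs at * <;> omega
  exact YoungDiagram.rowLen_of_colLen_add_one (by simpa using hcol (k - 1))
    fun j hj ↦ by simpa [hj] using hcol j

/-- Spaltenstein's lemma. If `U` is a line in `ker x` contained in
`x^{k-1}(V')` but not in `x^k(V')`, and `x` has Jordan type `σ` on `V'`, then the Jordan type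
of `x` on `V'/U` is obtained from `σ` by decreasing by `1` the part `σ_j`, where `j` is
maximal such that `σ_j ≥ k` (removal of the last box of column `k`). -/
theorem spaltenstein_quotient_lemma {V' : Type*} [AddCommGroup V'] [Module ℂ V']
    [FiniteDimensional ℂ V'] (x : Module.End ℂ V') (hx : IsNilpotent x)
    (σ : YoungDiagram) (hσ : HasJordanType x σ)
    (U : Submodule ℂ V') (hU1 : Module.finrank ℂ U = 1) (hUker : U ≤ LinearMap.ker x)
    (k : ℕ) (hk : 1 ≤ k)
    (hk1 : U ≤ LinearMap.range (x ^ (k - 1))) (hk2 : ¬ U ≤ LinearMap.range (x ^ k)) :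
    ∀ x' : Module.End ℂ (V' ⧸ U),
      (∀ v : V', x' (Submodule.Quotient.mk v) = Submodule.Quotient.mk (x v)) →
      ∀ σ' : YoungDiagram, HasJordanType x' σ' →
        σ'.rowLen (σ.colLen (k - 1) - 1) = σ.rowLen (σ.colLen (k - 1) - 1) - 1 ∧
        ∀ i : ℕ, i ≠ σ.colLen (k - 1) - 1 → σ'.rowLen i = σ.rowLen i :=
  spaltenstein_quotient_lemma_general x σ hσ U hU1 hUker k hk1 hk2
end
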